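/- arXiv:1610.06008 — 3 statements merged into one kernel-verified Lean document; each statement's English description precedes it below -/
import Mathlib

section
/- Let G' = (V', E') be a finite simple undirected graph with an edge-labeling ℓ : E' → L, let S* ⊆ S_I ⊆ V' with S* nonempty, and let u ∈ S* satisfy q_{S_I}(u) ≤ q_{S_I}(v) for all v ∈ S_I. Then d(S_I) ≥ Σ_{v ∈ S*} q_{S*}(v) + (|S_I| − |S*|) · q_{S_I}(u) = |S*| · f(S*) + (|S_I| − |S*|) · q_{S_I}(u). -/
/-- `labeledDeg G ℓ S v l` is the number of edges of the subgraph of `G` induced by `S`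
that are incident to the vertex `v` and carry the label `l` under the edge-labeling `ℓ`. -/
def labeledDeg {V L : Type*} [DecidableEq V] [DecidableEq L]
    (G : SimpleGraph V) [DecidableRel G.Adj] (ℓ : Sym2 V → L)
    (S : Finset V) (v : V) (l : L) : ℕ :=
  (S.filter fun w => v ∈ S ∧ G.Adj v w ∧ ℓ s(v, w) = l).card

/-- `labelSet G ℓ v` is the set `L(v)` of labels of the edges of `G` incident to `v`. -/
def labelSet {V L : Type*} [Fintype V] [DecidableEq V] [DecidableEq L]
    (G : SimpleGraph V) [DecidableRel G.Adj] (ℓ : Sym2 V → L) (v : V) : Finset L :=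
  (Finset.univ.filter fun w => G.Adj v w).image fun w => ℓ s(v, w)

/-- `minLabeledDeg G ℓ S v = q_S(v) = min_{l ∈ L(v)} deg_S(v, l)`, with the convention
that it is `0` when `L(v)` is empty. -/
def minLabeledDeg {V L : Type*} [Fintype V] [DecidableEq V] [DecidableEq L]
    (G : SimpleGraph V) [DecidableRel G.Adj] (ℓ : Sym2 V → L)
    (S : Finset V) (v : V) : ℕ :=
  if h : (labelSet G ℓ v).Nonempty then (labelSet G ℓ v).inf' h (labeledDeg G ℓ S v)
  else 0

/-- `dSum G ℓ S = d(S) = Σ_{v ∈ S} q_S(v)`. -/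
def dSum {V L : Type*} [Fintype V] [DecidableEq V] [DecidableEq L]
    (G : SimpleGraph V) [DecidableRel G.Adj] (ℓ : Sym2 V → L) (S : Finset V) : ℕ :=
  ∑ v ∈ S, minLabeledDeg G ℓ S v

/-- The triangle-graph density `f(S) = d(S) / |S|`. -/
def tgDensity {V L : Type*} [Fintype V] [DecidableEq V] [DecidableEq L]
    (G : SimpleGraph V) [DecidableRel G.Adj] (ℓ : Sym2 V → L) (S : Finset V) : ℚ :=
  (dSum G ℓ S : ℚ) / (S.card : ℚ)

lemma minLabeledDeg_mono {V L : Type*} [Fintype V] [DecidableEq V] [DecidableEq L]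
    (G : SimpleGraph V) [DecidableRel G.Adj] (ℓ : Sym2 V → L)
    {S T : Finset V} (hST : S ⊆ T) (v : V) :
    minLabeledDeg G ℓ S v ≤ minLabeledDeg G ℓ T v := by
  unfold minLabeledDeg
  split
  · next h =>
    apply Finset.le_inf'
    intro l hl
    refine le_trans (Finset.inf'_le _ hl) ?_
    unfold labeledDeg
    apply Finset.card_le_card
    intro w hw
    simp only [Finset.mem_filter] at hw ⊢
    exact ⟨hST hw.1, hST hw.2.1, hw.2.2⟩
  · exact Nat.zero_le _

/-- If `S* ⊆ S_I` with `S*` nonempty and `u ∈ S*` has minimum `q_{S_I}`-value among the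
vertices of `S_I`, then
`d(S_I) ≥ Σ_{v ∈ S*} q_{S*}(v) + (|S_I| − |S*|) · q_{S_I}(u)
       = |S*| · f(S*) + (|S_I| − |S*|) · q_{S_I}(u)`. -/
theorem dSum_ge_of_min {V L : Type*} [Fintype V] [DecidableEq V] [DecidableEq L]
    (G : SimpleGraph V) [DecidableRel G.Adj] (ℓ : Sym2 V → L)
    (Sstar SI : Finset V) (hsub : Sstar ⊆ SI) (hne : Sstar.Nonempty)
    (u : V) (hu : u ∈ Sstar)
    (hmin : ∀ v ∈ SI, minLabeledDeg G ℓ SI u ≤ minLabeledDeg G ℓ SI v) :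
    dSum G ℓ SI ≥
      (∑ v ∈ Sstar, minLabeledDeg G ℓ Sstar v) +
        (SI.card - Sstar.card) * minLabeledDeg G ℓ SI u ∧
    ((∑ v ∈ Sstar, minLabeledDeg G ℓ Sstar v : ℚ) +
        ((SI.card - Sstar.card : ℕ) : ℚ) * (minLabeledDeg G ℓ SI u : ℚ) =
      (Sstar.card : ℚ) * tgDensity G ℓ Sstar +
        ((SI.card - Sstar.card : ℕ) : ℚ) * (minLabeledDeg G ℓ SI u : ℚ)) := by
  constructor
  · unfold dSum
    rw [← Finset.sum_sdiff hsub]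
    have h1 : (SI.card - Sstar.card) * minLabeledDeg G ℓ SI u
        ≤ ∑ v ∈ SI \ Sstar, minLabeledDeg G ℓ SI v := by
      rw [← Finset.card_sdiff_of_subset hsub]
      calc (SI \ Sstar).card * minLabeledDeg G ℓ SI u
          = ∑ _v ∈ SI \ Sstar, minLabeledDeg G ℓ SI u := by
            rw [Finset.sum_const, smul_eq_mul]
        _ ≤ _ := Finset.sum_le_sum fun v hv => hmin v (Finset.mem_sdiff.mp hv).1
    have h2 : ∑ v ∈ Sstar, minLabeledDeg G ℓ Sstar v
        ≤ ∑ v ∈ Sstar, minLabeledDeg G ℓ SI v :=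
      Finset.sum_le_sum fun v _ => minLabeledDeg_mono G ℓ hsub v
    omega
  · congr 1
    unfold tgDensity dSum
    have hc : (Sstar.card : ℚ) ≠ 0 := by
      exact_mod_cast hne.card_pos.ne'
    push_cast
    field_simp
end

section
/- Let G' = (V', E') be a finite simple undirected graph with an edge-labeling ℓ : E' → L, let S* ⊆ S_I ⊆ V' with S* nonempty (hence S_I nonempty), and let u ∈ S* satisfy q_{S_I}(u) ≤ q_{S_I}(v) for all v ∈ S_I. Then f(S_I) ≥ (|S*|/|S_I|) · f(S*) + (1 − |S*|/|S_I|) · q_{S_I}(u). -/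
section

variable {V L : Type*} [Fintype V] [DecidableEq V] [DecidableEq L]
  (G : SimpleGraph V) [DecidableRel G.Adj] (ℓ : Sym2 V → L) {S T : Finset V}

omit [Fintype V] in
lemma labeledDeg_mono (hST : S ⊆ T) (v : V) (l : L) :
    labeledDeg G ℓ S v l ≤ labeledDeg G ℓ T v l := by
  refine Finset.card_le_card fun w => ?_
  simp only [Finset.mem_filter]
  exact fun ⟨hw, hv, hvw⟩ => ⟨hST hw, hST hv, hvw⟩

lemma minLabeledDeg_mono_s4 (hST : S ⊆ T) (v : V) :
    minLabeledDeg G ℓ S v ≤ minLabeledDeg G ℓ T v := by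
  unfold minLabeledDeg
  split_ifs
  · exact Finset.inf'_mono_fun fun l _ => labeledDeg_mono G ℓ hST v l
  · rfl

lemma dSum_add_card_sdiff_mul_le (hST : S ⊆ T) {q : ℕ}
    (hq : ∀ v ∈ T \ S, q ≤ minLabeledDeg G ℓ T v) :
    dSum G ℓ S + (T \ S).card * q ≤ dSum G ℓ T := by
  rw [dSum, dSum, ← Finset.sum_sdiff hST, add_comm, ← smul_eq_mul, ← Finset.sum_const]
  gcongr with v hv v hv
  · exact hq v hv
  · exact minLabeledDeg_mono_s4 G ℓ hST v

lemma card_mul_tgDensity (hS : S.Nonempty) :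
    (S.card : ℚ) * tgDensity G ℓ S = dSum G ℓ S := by
  rw [tgDensity, mul_div_cancel₀]
  exact_mod_cast hS.card_pos.ne'

end

theorem tgDensity_ge_of_min_general {V L : Type*} [Fintype V] [DecidableEq V] [DecidableEq L]
    (G : SimpleGraph V) [DecidableRel G.Adj] (ℓ : Sym2 V → L)
    (Sstar SI : Finset V) (hsub : Sstar ⊆ SI) (hne : Sstar.Nonempty)
    (u : V)
    (hmin : ∀ v ∈ SI, minLabeledDeg G ℓ SI u ≤ minLabeledDeg G ℓ SI v) :
    tgDensity G ℓ SI ≥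
      ((Sstar.card : ℚ) / (SI.card : ℚ)) * tgDensity G ℓ Sstar +
        (1 - (Sstar.card : ℚ) / (SI.card : ℚ)) * (minLabeledDeg G ℓ SI u : ℚ) := by
  have hSI : (0 : ℚ) < SI.card := by exact_mod_cast (hne.mono hsub).card_pos
  have key : (dSum G ℓ Sstar : ℚ) + ((SI.card : ℚ) - Sstar.card) * minLabeledDeg G ℓ SI u
      ≤ dSum G ℓ SI := by
    have h := dSum_add_card_sdiff_mul_le G ℓ hsub fun v hv => hmin v (Finset.mem_sdiff.mp hv).1
    rw [Finset.card_sdiff_of_subset hsub] at h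
    rw [← Nat.cast_sub (Finset.card_le_card hsub)]
    exact_mod_cast h
  rw [ge_iff_le, div_mul_eq_mul_div, card_mul_tgDensity G ℓ hne, tgDensity, le_div_iff₀ hSI]
  calc _ = (dSum G ℓ Sstar : ℚ) + ((SI.card : ℚ) - Sstar.card) * minLabeledDeg G ℓ SI u := by
        field_simp
    _ ≤ _ := key

/-- If `S* ⊆ S_I` with `S*` nonempty (hence `S_I` nonempty) and `u ∈ S*` has minimum
`q_{S_I}`-value among the vertices of `S_I`, then
`f(S_I) ≥ (|S*|/|S_I|) · f(S*) + (1 − |S*|/|S_I|) · q_{S_I}(u)`. -/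
theorem tgDensity_ge_of_min {V L : Type*} [Fintype V] [DecidableEq V] [DecidableEq L]
    (G : SimpleGraph V) [DecidableRel G.Adj] (ℓ : Sym2 V → L)
    (Sstar SI : Finset V) (hsub : Sstar ⊆ SI) (hne : Sstar.Nonempty)
    (u : V) (hu : u ∈ Sstar)
    (hmin : ∀ v ∈ SI, minLabeledDeg G ℓ SI u ≤ minLabeledDeg G ℓ SI v) :
    tgDensity G ℓ SI ≥
      ((Sstar.card : ℚ) / (SI.card : ℚ)) * tgDensity G ℓ Sstar +
        (1 - (Sstar.card : ℚ) / (SI.card : ℚ)) * (minLabeledDeg G ℓ SI u : ℚ) :=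
  tgDensity_ge_of_min_general G ℓ Sstar SI hsub hne u hmin
end

section
/- (Theorem 1.) Let G' = (V', E') be a finite simple undirected graph on n vertices with an edge-labeling ℓ : E' → L, and let V' = S_n ⊋ S_{n−1} ⊋ ⋯ ⊋ S_0 = ∅ be a greedy peeling chain, i.e., for each i ≥ 1, S_{i−1} = S_i \ {u_i} where u_i ∈ S_i satisfies q_{S_i}(u_i) ≤ q_{S_i}(v) for all v ∈ S_i. Let S be a set among S_1, …, S_n maximizing f, and let S* ⊆ V' be a nonempty set maximizing f over all nonempty subsets of V'. Let I be an index such that S* ⊆ S_I and the vertex u_I removed from S_I belongs to S* (the iteration just before the first vertex of S* is removed). Then f(S) ≥ (|S*|/|S_I|) · f(S*) + (1 − |S*|/|S_I|) · q_{S_I}(u_I). -/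
/-- **Theorem 1.** Let `V' = S n ⊋ S (n-1) ⊋ ⋯ ⊋ S 0 = ∅` (with `n = |V'|`) be a greedy
peeling chain: for each `1 ≤ i ≤ n`, `S (i-1) = S i \ {u i}` where `u i ∈ S i` has minimum
`q_{S i}`-value among the vertices of `S i`.  Let `Sout` be a set among `S 1, …, S n`
maximizing `f`, and let `S*` be a nonempty subset of `V'` maximizing `f` over all nonempty
subsets.  If `I` is an index with `S* ⊆ S I` and `u I ∈ S*` (the iteration just before the
first vertex of `S*` is removed), then
`f(Sout) ≥ (|S*|/|S I|) · f(S*) + (1 − |S*|/|S I|) · q_{S I}(u I)`. -/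
theorem greedy_approx {V L : Type*} [Fintype V] [DecidableEq V] [DecidableEq L]
    (G : SimpleGraph V) [DecidableRel G.Adj] (ℓ : Sym2 V → L)
    (S : ℕ → Finset V) (u : ℕ → V)
    (hn : S (Fintype.card V) = (Finset.univ : Finset V)) (h0 : S 0 = ∅)
    (hchain : ∀ i, 1 ≤ i → i ≤ Fintype.card V →
      u i ∈ S i ∧ S (i - 1) = S i \ {u i} ∧
        ∀ v ∈ S i, minLabeledDeg G ℓ (S i) (u i) ≤ minLabeledDeg G ℓ (S i) v)
    (Sout : Finset V) (hout : ∃ j, 1 ≤ j ∧ j ≤ Fintype.card V ∧ Sout = S j)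
    (hbest : ∀ j, 1 ≤ j → j ≤ Fintype.card V → tgDensity G ℓ (S j) ≤ tgDensity G ℓ Sout)
    (Sstar : Finset V) (hne : Sstar.Nonempty)
    (hopt : ∀ T : Finset V, T.Nonempty → tgDensity G ℓ T ≤ tgDensity G ℓ Sstar)
    (I : ℕ) (hI1 : 1 ≤ I) (hIn : I ≤ Fintype.card V)
    (hsub : Sstar ⊆ S I) (huI : u I ∈ Sstar) :
    tgDensity G ℓ Sout ≥
      ((Sstar.card : ℚ) / ((S I).card : ℚ)) * tgDensity G ℓ Sstar +
        (1 - (Sstar.card : ℚ) / ((S I).card : ℚ)) *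
          (minLabeledDeg G ℓ (S I) (u I) : ℚ) := by
  obtain ⟨huImem, hprev, hmin⟩ := hchain I hI1 hIn
  set q : ℕ := minLabeledDeg G ℓ (S I) (u I) with hqdef
  have hsne : (0 : ℚ) < (Sstar.card : ℚ) := by
    exact_mod_cast Finset.card_pos.mpr hne
  have hcpos : (0 : ℚ) < ((S I).card : ℚ) := by
    exact_mod_cast Finset.card_pos.mpr ⟨u I, huImem⟩
  have hcardle : Sstar.card ≤ (S I).card := Finset.card_le_card hsub
  -- monotonicity of minLabeledDeg in the vertex set
  have hmono : ∀ v ∈ Sstar, minLabeledDeg G ℓ Sstar v ≤ minLabeledDeg G ℓ (S I) v := by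
    intro v hv
    unfold minLabeledDeg
    split
    case isTrue h =>
      apply Finset.le_inf'
      intro l hl
      refine le_trans (Finset.inf'_le _ hl) ?_
      unfold labeledDeg
      apply Finset.card_le_card
      intro w hw
      simp only [Finset.mem_filter] at hw ⊢
      exact ⟨hsub hw.1, hsub hv, hw.2.2⟩
    case isFalse h => exact le_refl 0
  -- the key sum inequality over S I
  have hkey : dSum G ℓ Sstar + ((S I).card - Sstar.card) * q ≤ dSum G ℓ (S I) := by
    have hsplit : ∑ v ∈ (S I) \ Sstar, minLabeledDeg G ℓ (S I) v
        + ∑ v ∈ Sstar, minLabeledDeg G ℓ (S I) v = dSum G ℓ (S I) :=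
      Finset.sum_sdiff hsub
    have h1 : dSum G ℓ Sstar ≤ ∑ v ∈ Sstar, minLabeledDeg G ℓ (S I) v :=
      Finset.sum_le_sum hmono
    have h2 : ((S I).card - Sstar.card) * q
        ≤ ∑ v ∈ (S I) \ Sstar, minLabeledDeg G ℓ (S I) v := by
      rw [← Finset.card_sdiff_of_subset hsub]
      calc ((S I) \ Sstar).card * q = ∑ _v ∈ (S I) \ Sstar, q := by
            rw [Finset.sum_const, smul_eq_mul]
        _ ≤ _ := Finset.sum_le_sum fun v hv =>
            hmin v (Finset.mem_sdiff.mp hv).1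
    omega
  have hkeyQ : (dSum G ℓ Sstar : ℚ) + (((S I).card : ℚ) - (Sstar.card : ℚ)) * q
      ≤ (dSum G ℓ (S I) : ℚ) := by
    have h : ((dSum G ℓ Sstar + ((S I).card - Sstar.card) * q : ℕ) : ℚ)
        ≤ ((dSum G ℓ (S I) : ℕ) : ℚ) := by exact_mod_cast hkey
    push_cast [Nat.cast_sub hcardle] at h
    linarith
  have hSI : (dSum G ℓ Sstar + (((S I).card : ℚ) - Sstar.card) * q) / ((S I).card : ℚ)
      ≤ tgDensity G ℓ (S I) := by
    unfold tgDensity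
    gcongr
  have hbestI := hbest I hI1 hIn
  refine le_trans (le_of_eq ?_) (le_trans hSI hbestI)
  unfold tgDensity
  have hs0 : (Sstar.card : ℚ) ≠ 0 := ne_of_gt hsne
  have hc0 : ((S I).card : ℚ) ≠ 0 := ne_of_gt hcpos
  field_simp
end
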